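/- Every exceptional Krall polynomial t̂_{n+1}(x;b) = (b² − 2n)(x+b)h_n(x) − b·h_n(x) − n·h_{n-1}(x) satisfies the one-point condition γ_b(t̂_{n+1}) = 0, where γ_b(p) = p'(−b) + b·p(−b). -/

import Mathlib

/-- Monic Hermite polynomials. -/
noncomputable def hermiteMonic (n : ℕ) : Polynomial ℝ :=
  ∑ j ∈ Finset.range (n / 2 + 1),
    Polynomial.C ((n.factorial : ℝ) / ((n - 2 * j).factorial * j.factorial) * (-(1:ℝ)/4) ^ j) *
      Polynomial.X ^ (n - 2 * j)

/-- Exceptional Krall polynomial t̂_{n+1}(x;b). -/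
noncomputable def krall (b : ℝ) (n : ℕ) : Polynomial ℝ :=
  Polynomial.C (b ^ 2 - 2 * n) * (Polynomial.X + Polynomial.C b) * hermiteMonic n
    - Polynomial.C b * hermiteMonic n - Polynomial.C (n : ℝ) * hermiteMonic (n - 1)

/-!
Writing the coefficients of `hermiteMonic n` with descending factorials, they satisfy two
Pascal-type identities, which give the Appell property `h_{n+1}' = (n + 1) h_n` and the recurrence
`h_{n+1} = X h_n - h_n' / 2`. Since the factor `X + b` vanishes at `-b`, these two facts reduce
`γ_b(t̂_{m+2})` to `-(m + 1) (2 h_{m+1} + 2 b h_m + h_m')(-b)`, which is zero by the recurrence.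
-/

open Polynomial Finset Nat

theorem Nat.succ_descFactorial_succ_eq_add (n k : ℕ) :
    (n + 1).descFactorial (k + 1) = n.descFactorial (k + 1) + (k + 1) * n.descFactorial k := by
  rcases le_or_gt k n with hkn | hnk
  · obtain ⟨m, rfl⟩ := Nat.exists_eq_add_of_le hkn
    rw [succ_descFactorial_succ, descFactorial_succ, Nat.add_sub_cancel_left]
    ring
  · simp [descFactorial_of_lt, hnk]

/-- The coefficient `n! / ((n - 2j)! j!) (-1/4)^j` of `X ^ (n - 2j)` in `hermiteMonic n`, written
with `descFactorial` so that it vanishes for `2j > n` instead of taking a junk value. -/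
noncomputable def hermiteCoeff (n j : ℕ) : ℝ :=
  (n.descFactorial (2 * j) : ℝ) / j ! * (-1 / 4) ^ j

@[simp]
theorem hermiteCoeff_zero_right (n : ℕ) : hermiteCoeff n 0 = 1 := by
  simp [hermiteCoeff]

theorem hermiteCoeff_of_lt {n j : ℕ} (h : n < 2 * j) : hermiteCoeff n j = 0 := by
  simp [hermiteCoeff, descFactorial_of_lt h]

theorem hermiteCoeff_succ_mul (n j : ℕ) :
    hermiteCoeff (n + 1) j * ((n + 1 - 2 * j : ℕ) : ℝ) = (n + 1) * hermiteCoeff n j := by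
  have h : (n + 1 - 2 * j) * (n + 1).descFactorial (2 * j) = (n + 1) * n.descFactorial (2 * j) :=
    succ_descFactorial n (2 * j)
  simp only [hermiteCoeff]
  rw [← Nat.cast_inj (R := ℝ)] at h
  push_cast at h
  linear_combination (-1 / 4 : ℝ) ^ j / j ! * h

theorem hermiteCoeff_succ_succ (n j : ℕ) :
    hermiteCoeff (n + 1) (j + 1)
      = hermiteCoeff n (j + 1) - hermiteCoeff n j * ((n - 2 * j : ℕ) : ℝ) / 2 := by
  have hpascal := succ_descFactorial_succ_eq_add n (2 * j + 1)
  have hstep : n.descFactorial (2 * j + 1) = (n - 2 * j) * n.descFactorial (2 * j) :=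
    descFactorial_succ n (2 * j)
  simp only [hermiteCoeff, Nat.mul_succ, factorial_succ]
  rw [← Nat.cast_inj (R := ℝ)] at hpascal hstep
  push_cast at hpascal hstep ⊢
  field_simp
  linear_combination 2 * (-(1 / 4 : ℝ)) ^ (j + 1) * hpascal - (j + 1) * (-(1 / 4 : ℝ)) ^ j * hstep

theorem hermiteMonic_eq_sum_range {n N : ℕ} (hN : n / 2 < N) :
    hermiteMonic n = ∑ j ∈ range N, C (hermiteCoeff n j) * X ^ (n - 2 * j) := by
  rw [hermiteMonic, ← sum_subset (range_subset_range.2 (by omega : n / 2 + 1 ≤ N))]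
  · refine sum_congr rfl fun j hj => ?_
    have h2j : 2 * j ≤ n := by rw [mem_range] at hj; omega
    rw [hermiteCoeff, ← factorial_mul_descFactorial h2j]
    push_cast
    field_simp
  · intro j _ hj
    rw [hermiteCoeff_of_lt (by rw [mem_range] at hj; omega), C_0, zero_mul]

@[simp]
theorem hermiteMonic_zero : hermiteMonic 0 = 1 := by
  simp [hermiteMonic]

theorem derivative_hermiteMonic_succ (n : ℕ) :
    derivative (hermiteMonic (n + 1)) = C ((n : ℝ) + 1) * hermiteMonic n := by
  rw [hermiteMonic_eq_sum_range (N := n + 1) (by omega),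
    hermiteMonic_eq_sum_range (N := n + 1) (by omega), derivative_sum, mul_sum]
  refine sum_congr rfl fun j _ => ?_
  rw [derivative_C_mul_X_pow, ← mul_assoc, ← C_mul, ← hermiteCoeff_succ_mul,
    show n + 1 - 2 * j - 1 = n - 2 * j by omega]

theorem X_mul_hermiteMonic (n : ℕ) :
    X * hermiteMonic n
      = ∑ j ∈ range (n + 1), C (hermiteCoeff n (j + 1)) * X ^ (n - 2 * j - 1) + X ^ (n + 1) := by
  rw [hermiteMonic_eq_sum_range (N := n + 2) (by omega), mul_sum, sum_range_succ',
    hermiteCoeff_zero_right, C_1, one_mul, Nat.mul_zero, Nat.sub_zero, pow_succ' X n]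
  congr 1
  refine sum_congr rfl fun j _ => ?_
  rcases le_or_gt (2 * (j + 1)) n with hj | hj
  · rw [show n - 2 * j - 1 = n - 2 * (j + 1) + 1 by omega]
    ring
  · simp [hermiteCoeff_of_lt hj]

theorem hermiteMonic_succ (n : ℕ) :
    hermiteMonic (n + 1) = X * hermiteMonic n - C (1 / 2 : ℝ) * derivative (hermiteMonic n) := by
  rw [X_mul_hermiteMonic, hermiteMonic_eq_sum_range (n := n) (N := n + 1) (by omega),
    derivative_sum, mul_sum, hermiteMonic_eq_sum_range (N := n + 2) (by omega), sum_range_succ',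
    hermiteCoeff_zero_right, C_1, one_mul, Nat.mul_zero, Nat.sub_zero, add_sub_right_comm,
    ← sum_sub_distrib]
  congr 1
  refine sum_congr rfl fun j _ => ?_
  rw [derivative_C_mul_X_pow, hermiteCoeff_succ_succ,
    show n + 1 - 2 * (j + 1) = n - 2 * j - 1 by omega, ← mul_assoc, ← C_mul, ← sub_mul, ← C_sub]
  congr 2
  ring

theorem krall_one_point_condition (b : ℝ) (n : ℕ) :
    (Polynomial.derivative (krall b n)).eval (-b) + b * (krall b n).eval (-b) = 0 := by
  cases n with
  | zero =>
    simp only [krall, Nat.zero_sub, hermiteMonic_zero, derivative_sub, derivative_mul,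
      derivative_add, derivative_X, derivative_C, derivative_one, eval_sub, eval_mul, eval_add,
      eval_X, eval_C, eval_zero, eval_one]
    ring
  | succ m =>
    have hrec := congrArg (eval (-b)) (hermiteMonic_succ m)
    simp only [eval_sub, eval_mul, eval_X, eval_C] at hrec
    simp only [krall, derivative_hermiteMonic_succ, Nat.add_sub_cancel, derivative_sub,
      derivative_mul, derivative_add, derivative_X, derivative_C, eval_sub, eval_mul, eval_add,
      eval_X, eval_C, eval_zero, eval_one, Nat.cast_succ]
    linear_combination (-2 * ((m : ℝ) + 1)) * hrec
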